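/- Let U be a domain in ℝ^m and V a domain in ℝ^n, m, n ≥ 1. Let v : U × V → [-∞,∞) be such that (a) for each y ∈ V the function x ↦ v(x,y) is Lebesgue integrable on U, and for almost every y ∈ V and every x ∈ U one has (1/(ν_m r^m)) ∫_{B^m(x,r)} v(z,y) dm_m(z) → v(x,y) as r → 0; (b) for each x ∈ U the function y ↦ v(x,y) is upper semicontinuous on V. Then v is Lebesgue measurable on U × V. -/

import Mathlib

open MeasureTheory Metric Set Filter
open scoped ENNReal NNReal Topology

noncomputable section

/-- `ℝ^N` with the Euclidean metric. -/
abbrev Eucl (N : ℕ) := EuclideanSpace ℝ (Fin N)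

/-- The positive part of an extended real number, as an element of `ℝ≥0∞`. -/
noncomputable def ERealPos (x : EReal) : ℝ≥0∞ :=
  if x = ⊤ then ⊤ else ENNReal.ofReal x.toReal

/-- The (extended-real valued) Lebesgue integral of an extended-real valued function:
the upper integral of its positive part minus the upper integral of its negative part. -/
noncomputable def eIntegral {α : Type*} [MeasurableSpace α] (μ : Measure α)
    (f : α → EReal) : EReal :=
  ((∫⁻ a, ERealPos (f a) ∂μ : ℝ≥0∞) : EReal) - ((∫⁻ a, ERealPos (-(f a)) ∂μ : ℝ≥0∞) : EReal)

/-- `u(x) ≤ (K/(ν_N r^N)) ∫_{B(x,r)} u dm_N`; note that `ν_N r^N` is exactly the Lebesgue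
measure of the ball `B^N(x,r)`. -/
def MeanIneqAt {N : ℕ} (K : ℝ) (u : Eucl N → EReal) (x : Eucl N) (r : ℝ) : Prop :=
  u x ≤ ((K / (volume (ball x r)).toReal : ℝ) : EReal) *
    eIntegral (volume.restrict (ball x r)) u

/-- The mean value inequality with constant `K`, for all closed balls contained in `D`. -/
def MeanIneqOn {N : ℕ} (K : ℝ) (u : Eucl N → EReal) (D : Set (Eucl N)) : Prop :=
  ∀ x : Eucl N, ∀ r : ℝ, 0 < r → closedBall x r ⊆ D → MeanIneqAt K u x r

/-- `u⁺ ∈ L¹_loc(D)`: the positive part of `u` is integrable on every compact subset of `D`. -/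
def PosPartLocInt {N : ℕ} (u : Eucl N → EReal) (D : Set (Eucl N)) : Prop :=
  ∀ C : Set (Eucl N), C ⊆ D → IsCompact C → (∫⁻ x in C, ERealPos (u x) ∂volume) < ⊤

/-- `u ∈ L¹_loc(D)` for an extended-real valued `u`. -/
def ERealLocInt {N : ℕ} (u : Eucl N → EReal) (D : Set (Eucl N)) : Prop :=
  PosPartLocInt u D ∧ PosPartLocInt (fun x => -(u x)) D

/-- `u` is nearly subharmonic on `D`. -/
def NearlySubharmonicOn {N : ℕ} (u : Eucl N → EReal) (D : Set (Eucl N)) : Prop :=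
  AEMeasurable u (volume.restrict D) ∧ PosPartLocInt u D ∧ MeanIneqOn 1 u D

/-- `u` is `K`-quasi-nearly subharmonic n.s. (in the narrow sense) on `D`. -/
def QNSubharmonicNSOn {N : ℕ} (K : ℝ) (u : Eucl N → EReal) (D : Set (Eucl N)) : Prop :=
  AEMeasurable u (volume.restrict D) ∧ PosPartLocInt u D ∧ MeanIneqOn K u D

/-- `u_M := max{u, -M} + M`. -/
noncomputable def shiftPos {N : ℕ} (u : Eucl N → EReal) (M : ℝ) : Eucl N → EReal :=
  fun x => max (u x) ((-M : ℝ) : EReal) + ((M : ℝ) : EReal)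

/-- `u` is `K`-quasi-nearly subharmonic on `D`. -/
def QNSubharmonicOn {N : ℕ} (K : ℝ) (u : Eucl N → EReal) (D : Set (Eucl N)) : Prop :=
  AEMeasurable u (volume.restrict D) ∧ PosPartLocInt u D ∧
    ∀ M : ℝ, 0 ≤ M → MeanIneqOn K (shiftPos u M) D

/-- `u` is subharmonic on `D`: upper semicontinuous and satisfying the mean value
inequality on all closed balls contained in `D` (the constant `-∞` is allowed). -/
def SubharmonicOn {N : ℕ} (u : Eucl N → EReal) (D : Set (Eucl N)) : Prop :=
  UpperSemicontinuousOn u D ∧ MeanIneqOn 1 u D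

/-- `h` is harmonic on `D`: continuous and satisfying the mean value equality. -/
def HarmonicMVOn {N : ℕ} (h : Eucl N → ℝ) (D : Set (Eucl N)) : Prop :=
  ContinuousOn h D ∧ ∀ x : Eucl N, ∀ r : ℝ, 0 < r → closedBall x r ⊆ D →
    h x = ⨍ y in ball x r, h y ∂volume

/-- The Δ₂-condition for a function on `[0,∞)`. -/
def Delta2 (φ : ℝ → ℝ) : Prop :=
  ∃ C ≥ (1 : ℝ), ∀ t ≥ (0 : ℝ), φ (2 * t) ≤ C * φ t

/-- Permissible functions `ψ : [0,∞) → [0,∞)`. -/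
def Permissible (ψ : ℝ → ℝ) : Prop :=
  ∃ ψ₁ ψ₂ : ℝ → ℝ,
    (∀ t ≥ (0 : ℝ), 0 ≤ ψ₁ t) ∧ MonotoneOn ψ₁ (Ici 0) ∧ ConvexOn ℝ (Ici 0) ψ₁ ∧
    Delta2 ψ₁ ∧
    (∀ t ≥ (0 : ℝ), 0 ≤ ψ₂ t) ∧ StrictMonoOn ψ₂ (Ici 0) ∧
    (∀ s ≥ (0 : ℝ), ∃ t ≥ (0 : ℝ), ψ₂ t = s) ∧
    (∃ C ≥ (1 : ℝ), ∀ s a b : ℝ, 0 ≤ s → 0 ≤ a → 0 ≤ b →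
      ψ₂ a = s → ψ₂ b = 2 * s → b ≤ C * a) ∧
    (∃ C > (0 : ℝ), ∀ s t : ℝ, 0 ≤ s → s ≤ t → C * (ψ₂ t / t) ≤ ψ₂ s / s) ∧
    (∀ t ≥ (0 : ℝ), ψ t = ψ₂ (ψ₁ t))

/-- `ψ` is non-constant on `[0,∞)`. -/
def NonConstantOnNonneg (ψ : ℝ → ℝ) : Prop :=
  ∃ s ≥ (0 : ℝ), ∃ t ≥ (0 : ℝ), ψ s ≠ ψ t

/-- `u` is a `λ`-Harnack function on `D`. -/
def HarnackOn {N : ℕ} (lam : ℝ) (u : Eucl N → ℝ) (D : Set (Eucl N)) : Prop :=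
  ContinuousOn u D ∧ (∀ x ∈ D, 0 ≤ u x) ∧
    ∃ C ≥ (1 : ℝ), ∀ x : Eucl N, ∀ r : ℝ, 0 < r → closedBall x r ⊆ D →
      ∀ z₁ ∈ closedBall x (lam * r), ∀ z₂ ∈ closedBall x (lam * r), u z₁ ≤ C * u z₂

/-- Lebesgue measure of the unit ball in `ℝ^N`. -/
noncomputable def unitBallVol (N : ℕ) : ℝ := (volume (ball (0 : Eucl N) 1)).toReal

/-- Identify `ℝ^m × ℝ^n` with `ℝ^(m+n)`. -/
noncomputable def joinE {m n : ℕ} (x : Eucl m) (y : Eucl n) : Eucl (m + n) :=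
  (EuclideanSpace.equiv (Fin (m + n)) ℝ).symm
    (Fin.append (EuclideanSpace.equiv (Fin m) ℝ x) (EuclideanSpace.equiv (Fin n) ℝ y))

/-- The section `Ω(y) = {x ∈ ℝ^m : (x,y) ∈ Ω}`. -/
def secY {m n : ℕ} (Ω : Set (Eucl (m + n))) (y : Eucl n) : Set (Eucl m) :=
  {x : Eucl m | joinE x y ∈ Ω}

/-- The section `Ω(x) = {y ∈ ℝ^n : (x,y) ∈ Ω}`. -/
def secX {m n : ℕ} (Ω : Set (Eucl (m + n))) (x : Eucl m) : Set (Eucl n) :=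
  {y : Eucl n | joinE x y ∈ Ω}

section Theorem13Aux
@[simp] lemma ERealPos_top : ERealPos ⊤ = ⊤ := by simp [ERealPos]
@[simp] lemma ERealPos_bot : ERealPos ⊥ = 0 := by simp [ERealPos]
@[simp] lemma ERealPos_coe (c : ℝ) : ERealPos (c : EReal) = ENNReal.ofReal c := by
  simp [ERealPos]
@[simp] lemma ERealPos_zero : ERealPos 0 = 0 := by simp [ERealPos]



lemma ERealPos_mono : Monotone ERealPos := by
  intro x y hxy
  induction y using EReal.rec with
  | bot => simp [le_bot_iff.mp hxy]
  | top => simp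
  | coe b =>
    induction x using EReal.rec with
    | bot => simp
    | top => simp at hxy
    | coe a =>
      simp only [ERealPos_coe]
      exact ENNReal.ofReal_le_ofReal (by exact_mod_cast hxy)

lemma measurable_ERealPos : Measurable ERealPos := by
  unfold ERealPos
  refine Measurable.ite (measurableSet_singleton _) measurable_const ?_
  exact ENNReal.measurable_ofReal.comp (measurable_ereal_toReal)

lemma coe_ennreal_eq_toReal {a : ℝ≥0∞} (ha : a ≠ ⊤) : (a : EReal) = ((a.toReal : ℝ) : EReal) := by
  conv_lhs => rw [← ENNReal.ofReal_toReal ha]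
  rw [EReal.coe_ennreal_ofReal, max_eq_left ENNReal.toReal_nonneg]

lemma measurable_esub :
    Measurable (fun q : ℝ≥0∞ × ℝ≥0∞ => ((q.1 : EReal) - (q.2 : EReal))) := by
  have heq : (fun q : ℝ≥0∞ × ℝ≥0∞ => ((q.1 : EReal) - (q.2 : EReal))) =
      fun q => if q.2 = ⊤ then (⊥ : EReal) else if q.1 = ⊤ then (⊤ : EReal)
        else ((q.1.toReal - q.2.toReal : ℝ) : EReal) := by
    funext q
    by_cases h2 : q.2 = ⊤
    · simp [h2, EReal.sub_top]
    · by_cases h1 : q.1 = ⊤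
      · rw [if_neg h2, if_pos h1, h1, coe_ennreal_eq_toReal h2]
        simp [EReal.top_sub_coe]
      · rw [if_neg h2, if_neg h1, coe_ennreal_eq_toReal h2, coe_ennreal_eq_toReal h1,
          ← EReal.coe_sub]
  rw [heq]
  refine Measurable.ite (measurable_snd (measurableSet_singleton _)) measurable_const ?_
  refine Measurable.ite (measurable_fst (measurableSet_singleton _)) measurable_const ?_
  exact measurable_coe_real_ereal.comp
    ((measurable_fst.ennreal_toReal).sub (measurable_snd.ennreal_toReal))

lemma const_mul_esub {c : ℝ} (hc : 0 ≤ c) (a b : ℝ≥0∞) :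
    ((c : ℝ) : EReal) * ((a : EReal) - (b : EReal)) =
      ((ENNReal.ofReal c * a : ℝ≥0∞) : EReal) - ((ENNReal.ofReal c * b : ℝ≥0∞) : EReal) := by
  rcases eq_or_lt_of_le hc with hc0 | hcpos
  · simp [← hc0]
  · have hd0 : ENNReal.ofReal c ≠ 0 := by simp [ENNReal.ofReal_eq_zero, not_le, hcpos]
    have hdt : ENNReal.ofReal c ≠ ⊤ := ENNReal.ofReal_ne_top
    by_cases hb : b = ⊤
    · rw [hb]
      have h1 : ((a : EReal) - ((⊤:ℝ≥0∞) : EReal)) = ⊥ := by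
        rw [EReal.coe_ennreal_top, EReal.sub_top]
      rw [h1, EReal.coe_mul_bot_of_pos hcpos, ENNReal.mul_top hd0,
        EReal.coe_ennreal_top, EReal.sub_top]
    · have hdb : ENNReal.ofReal c * b ≠ ⊤ := ENNReal.mul_ne_top hdt hb
      by_cases ha : a = ⊤
      · rw [ha, EReal.coe_ennreal_top, coe_ennreal_eq_toReal hb, EReal.top_sub_coe,
          EReal.coe_mul_top_of_pos hcpos, ENNReal.mul_top hd0, EReal.coe_ennreal_top,
          coe_ennreal_eq_toReal hdb, EReal.top_sub_coe]
      · have hda : ENNReal.ofReal c * a ≠ ⊤ := ENNReal.mul_ne_top hdt ha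
        rw [coe_ennreal_eq_toReal hb, coe_ennreal_eq_toReal ha,
          coe_ennreal_eq_toReal hdb, coe_ennreal_eq_toReal hda,
          ← EReal.coe_sub, ← EReal.coe_sub, ← EReal.coe_mul,
          ENNReal.toReal_mul, ENNReal.toReal_mul, ENNReal.toReal_ofReal hc, mul_sub]

lemma tendsto_add_one_div (t : ℝ) :
    Tendsto (fun j : ℕ => t + 1 / (j + 1)) atTop (𝓝 t) := by
  have := tendsto_one_div_add_atTop_nhds_zero_nat (𝕜 := ℝ)
  simpa using tendsto_const_nhds.add this

lemma liminf_pneg {t : EReal} (ht : t ≠ ⊤) {s : ℕ → EReal}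
    (hs : ∀ c : ℝ, t < (c : EReal) → ∀ᶠ j in atTop, s j < (c : EReal)) :
    ERealPos (-t) ≤ liminf (fun j => ERealPos (-(s j))) atTop := by
  set L := liminf (fun j => ERealPos (-(s j))) atTop with hL
  have key : ∀ c : ℝ, t < (c : EReal) → ENNReal.ofReal (-c) ≤ L := by
    intro c hc
    have h1 : ∀ᶠ j in atTop, ENNReal.ofReal (-c) ≤ ERealPos (-(s j)) := by
      filter_upwards [hs c hc] with j hj
      have : ((-c : ℝ) : EReal) ≤ -(s j) := by
        rw [EReal.coe_neg]
        exact EReal.neg_le_neg_iff.mpr hj.le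
      simpa only [ERealPos_coe] using ERealPos_mono this
    calc ENNReal.ofReal (-c) = liminf (fun _ : ℕ => ENNReal.ofReal (-c)) atTop :=
        (liminf_const _).symm
      _ ≤ L := liminf_le_liminf h1
  induction t using EReal.rec with
  | top => exact absurd rfl ht
  | bot =>
    rw [EReal.neg_bot, ERealPos_top]
    by_contra hlt
    push_neg at hlt
    obtain ⟨n, hn⟩ := ENNReal.exists_nat_gt hlt.ne
    have hle : (n : ℝ≥0∞) ≤ L := by
      have := key (-(n : ℝ)) (by exact_mod_cast EReal.bot_lt_coe _)
      simpa using this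
    exact absurd hn (not_lt.mpr hle)
  | coe a =>
    have htd : Tendsto (fun j : ℕ => ENNReal.ofReal (-(a + 1/(j+1)))) atTop
        (𝓝 (ENNReal.ofReal (-a))) := by
      apply ENNReal.tendsto_ofReal
      simpa using (tendsto_add_one_div a).neg
    have hb : ∀ᶠ j : ℕ in atTop, ENNReal.ofReal (-(a + 1/(j+1))) ≤ L := by
      refine Eventually.of_forall fun j => key _ ?_
      have : (0:ℝ) < 1/(j+1) := by positivity
      exact_mod_cast (by exact_mod_cast (lt_add_iff_pos_right a).mpr this :
        (a:EReal) < ((a + 1/(j+1) : ℝ) : EReal))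
    rw [show -((a:EReal)) = ((-a : ℝ) : EReal) by rw [EReal.coe_neg], ERealPos_coe]
    exact le_of_tendsto htd hb

lemma liminf_qK (K : ℕ) {t : EReal} {s : ℕ → EReal}
    (hs : ∀ c : ℝ, t < (c : EReal) → ∀ᶠ j in atTop, s j < (c : EReal)) :
    (K : ℝ≥0∞) - min (ERealPos t) K ≤
      liminf (fun j => (K : ℝ≥0∞) - min (ERealPos (s j)) K) atTop := by
  set L := liminf (fun j => (K : ℝ≥0∞) - min (ERealPos (s j)) K) atTop with hL
  have key : ∀ c : ℝ, t < (c : EReal) →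
      (K : ℝ≥0∞) - min (ENNReal.ofReal c) K ≤ L := by
    intro c hc
    have h1 : ∀ᶠ j in atTop,
        (K : ℝ≥0∞) - min (ENNReal.ofReal c) K ≤ (K : ℝ≥0∞) - min (ERealPos (s j)) K := by
      filter_upwards [hs c hc] with j hj
      have h2 : ERealPos (s j) ≤ ENNReal.ofReal c := by
        simpa using ERealPos_mono hj.le
      exact tsub_le_tsub_left (min_le_min_right _ h2) _
    calc (K : ℝ≥0∞) - min (ENNReal.ofReal c) K
        = liminf (fun _ : ℕ => (K : ℝ≥0∞) - min (ENNReal.ofReal c) K) atTop :=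
        (liminf_const _).symm
      _ ≤ L := liminf_le_liminf h1
  induction t using EReal.rec with
  | top => simp
  | bot =>
    have h := key (-1) (by exact_mod_cast EReal.bot_lt_coe _)
    have h0 : ENNReal.ofReal (-1 : ℝ) = 0 := by simp
    rw [h0] at h
    simpa only [ERealPos_bot, zero_le, min_eq_left, tsub_zero] using h
  | coe a =>
    have htd : Tendsto (fun j : ℕ => (K : ℝ≥0∞) - min (ENNReal.ofReal (a + 1/(j+1))) K)
        atTop (𝓝 ((K : ℝ≥0∞) - min (ENNReal.ofReal a) K)) := by
      have h1 : Tendsto (fun j : ℕ => min (ENNReal.ofReal (a + 1/(j+1))) (K : ℝ≥0∞))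
          atTop (𝓝 (min (ENNReal.ofReal a) K)) :=
        (ENNReal.tendsto_ofReal (tendsto_add_one_div a)).min tendsto_const_nhds
      exact ((ENNReal.continuous_sub_left (ENNReal.natCast_ne_top K)).tendsto _).comp h1
    have hb : ∀ᶠ j : ℕ in atTop, (K : ℝ≥0∞) - min (ENNReal.ofReal (a + 1/(j+1))) K ≤ L := by
      refine Eventually.of_forall fun j => key _ ?_
      have h3 : (0:ℝ) < 1/(j+1) := by positivity
      exact_mod_cast (lt_add_iff_pos_right a).mpr h3
    rw [ERealPos_coe]
    exact le_of_tendsto htd hb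

lemma measurable_param_lintegral {n : ℕ} {V : Set (Eucl n)} (hV : IsOpen V)
    {α : Type*} [MeasurableSpace α] (μ : Measure α) (g : α → Eucl n → ℝ≥0∞)
    (hmeas : ∀ y ∈ V, AEMeasurable (fun z => g z y) μ)
    (hzero : ∀ z y, y ∉ V → g z y = 0)
    (hlsc : ∀ z, ∀ y ∈ V, ∀ u : ℕ → Eucl n, (∀ j, u j ∈ V) → Tendsto u atTop (𝓝 y) →
      g z y ≤ liminf (fun j => g z (u j)) atTop) :
    Measurable fun y => ∫⁻ z, g z y ∂μ := by
  set J := fun y => ∫⁻ z, g z y ∂μ with hJ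
  apply measurable_of_Ioi
  intro c
  suffices hopen : IsOpen {y | c < J y} by
    have : J ⁻¹' Ioi c = {y | c < J y} := rfl
    rw [this]; exact hopen.measurableSet
  rw [isOpen_iff_mem_nhds]
  intro y₀ hy₀
  simp only [mem_setOf_eq] at hy₀
  have hy₀V : y₀ ∈ V := by
    by_contra h
    have hzero' : J y₀ = 0 := by
      simp only [hJ]
      rw [show (fun z => g z y₀) = fun _ => 0 from funext fun z => hzero z y₀ h]
      simp
    rw [hzero'] at hy₀
    exact absurd hy₀ (by simp)
  have hev : ∀ᶠ y in 𝓝[V] y₀, c < J y := by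
    by_contra hcon
    rw [Filter.not_eventually] at hcon
    obtain ⟨u, hu_t, hu_p⟩ := Filter.exists_seq_forall_of_frequently hcon
    have huV : ∀ᶠ j in atTop, u j ∈ V := hu_t.eventually_mem self_mem_nhdsWithin
    obtain ⟨N, hN⟩ := eventually_atTop.mp huV
    set w : ℕ → Eucl n := fun j => u (j + N) with hw
    have hwV : ∀ j, w j ∈ V := fun j => hN _ (Nat.le_add_left N j)
    have hw_t : Tendsto w atTop (𝓝 y₀) :=
      (hu_t.comp (tendsto_add_atTop_nat N)).mono_right nhdsWithin_le_nhds
    have h1 : J y₀ ≤ liminf (fun j => J (w j)) atTop := by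
      calc J y₀ ≤ ∫⁻ z, liminf (fun j => g z (w j)) atTop ∂μ :=
            lintegral_mono fun z => hlsc z y₀ hy₀V w hwV hw_t
        _ ≤ liminf (fun j => J (w j)) atTop :=
            lintegral_liminf_le' (fun j => hmeas (w j) (hwV j))
    have h2 : liminf (fun j => J (w j)) atTop ≤ c := by
      calc liminf (fun j => J (w j)) atTop ≤ liminf (fun _ : ℕ => c) atTop :=
            liminf_le_liminf (Eventually.of_forall fun j => not_lt.mp (hu_p (j + N)))
        _ = c := liminf_const _
    exact absurd (hy₀.trans_le (h1.trans h2)) (lt_irrefl c)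
  have heq : 𝓝[V] y₀ = 𝓝 y₀ := hV.nhdsWithin_eq hy₀V
  rw [heq] at hev
  exact hev.mono fun y hy => hy

lemma eucl_nontrivial {m : ℕ} (hm : 1 ≤ m) : Nontrivial (Eucl m) := by
  refine ⟨⟨EuclideanSpace.single ⟨0, hm⟩ (1:ℝ), 0, fun h => ?_⟩⟩
  have := congrArg (fun w : Eucl m => w ⟨0, hm⟩) h
  simp [EuclideanSpace.single_apply] at this

lemma continuous_ball_lintegral {m : ℕ} (hm : 1 ≤ m) (r : ℝ) (g : Eucl m → ℝ≥0∞)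
    (hg : AEMeasurable g volume)
    (hloc : ∀ x : Eucl m, ∫⁻ z in ball x (r + 1), g z ∂volume ≠ ⊤) :
    Continuous fun x : Eucl m => ∫⁻ z in ball x r, g z ∂volume := by
  haveI : Nontrivial (Eucl m) := eucl_nontrivial hm
  set G := hg.mk g with hG
  have hGmeas : Measurable G := hg.measurable_mk
  have hgG : g =ᵐ[volume] G := hg.ae_eq_mk
  have hFeq : ∀ x : Eucl m, ∀ s : ℝ, ∫⁻ z in ball x s, g z ∂volume
      = ∫⁻ z, (ball x s).indicator G z ∂volume := by
    intro x s
    rw [lintegral_indicator measurableSet_ball]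
    exact lintegral_congr_ae (ae_restrict_of_ae hgG)
  rw [continuous_iff_continuousAt]
  intro x₀
  rw [ContinuousAt, tendsto_iff_seq_tendsto]
  intro u hu
  set u' : ℕ → Eucl m := fun j => if dist (u j) x₀ < 1 then u j else x₀ with hu'
  have hd1 : ∀ j, dist (u' j) x₀ < 1 := by
    intro j
    by_cases h : dist (u j) x₀ < 1 <;> simp [hu', h]
  have huu' : ∀ᶠ j in atTop, u j = u' j := by
    have : ∀ᶠ j in atTop, dist (u j) x₀ < 1 :=
      (hu.eventually (Metric.ball_mem_nhds x₀ one_pos)).mono fun j hj => hj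
    exact this.mono fun j hj => by simp [hu', hj]
  have hu't : Tendsto u' atTop (𝓝 x₀) := hu.congr' huu'
  have hsphere : ∀ᵐ z : Eucl m ∂volume, z ∉ sphere x₀ r := by
    rw [ae_iff]
    push_neg
    exact measure_mono_null (fun a ha => by simpa using ha) (Measure.addHaar_sphere volume x₀ r)
  have hlim : ∀ᵐ z : Eucl m ∂volume,
      Tendsto (fun j => (ball (u' j) r).indicator G z) atTop
        (𝓝 ((ball x₀ r).indicator G z)) := by
    filter_upwards [hsphere] with z hz
    have hdist : Tendsto (fun j => dist z (u' j)) atTop (𝓝 (dist z x₀)) :=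
      tendsto_const_nhds.dist hu't
    rcases lt_or_gt_of_ne (show dist z x₀ ≠ r from fun h => hz h) with hlt | hgt
    · have hev : ∀ᶠ j in atTop, dist z (u' j) < r :=
        hdist.eventually (eventually_lt_nhds hlt)
      have h1 : ∀ᶠ j in atTop, (ball (u' j) r).indicator G z = G z := by
        filter_upwards [hev] with j hj
        rw [indicator_of_mem (mem_ball.mpr hj)]
      rw [indicator_of_mem (mem_ball.mpr hlt)]
      exact tendsto_const_nhds.congr' (h1.mono fun j hj => hj.symm)
    · have hev : ∀ᶠ j in atTop, r < dist z (u' j) :=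
        hdist.eventually (eventually_gt_nhds hgt)
      have h1 : ∀ᶠ j in atTop, (ball (u' j) r).indicator G z = 0 := by
        filter_upwards [hev] with j hj
        rw [indicator_of_notMem (fun hmem => absurd (mem_ball.mp hmem) (not_lt.mpr hj.le))]
      rw [indicator_of_notMem (fun hmem => absurd (mem_ball.mp hmem) (not_lt.mpr hgt.le))]
      exact tendsto_const_nhds.congr' (h1.mono fun j hj => hj.symm)
  have hdom : Tendsto (fun j => ∫⁻ z, (ball (u' j) r).indicator G z ∂volume) atTop
      (𝓝 (∫⁻ z, (ball x₀ r).indicator G z ∂volume)) := by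
    refine tendsto_lintegral_of_dominated_convergence ((ball x₀ (r+1)).indicator G)
      (fun j => hGmeas.indicator measurableSet_ball) (fun j => ?_) ?_ hlim
    · refine Eventually.of_forall fun z => ?_
      refine indicator_le_indicator_of_subset (fun w hw => ?_) (fun _ => zero_le) z
      calc dist w x₀ ≤ dist w (u' j) + dist (u' j) x₀ := dist_triangle ..
        _ < r + 1 := add_lt_add (mem_ball.mp hw) (hd1 j)
    · have hfin := hloc x₀
      rw [hFeq x₀ (r+1)] at hfin
      exact hfin
  have heqv : ∀ᶠ j in atTop, ∫⁻ z, (ball (u' j) r).indicator G z ∂volume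
      = ∫⁻ z in ball (u j) r, g z ∂volume := by
    filter_upwards [huu'] with j hj
    rw [hFeq, hj]
  rw [hFeq x₀ r]
  exact hdom.congr' heqv

end Theorem13Aux

/-- measurability of a function which is integrable with a.e. convergent
ball averages in the first variable and upper semicontinuous in the second variable. -/
theorem separately_measurable
    {m n : ℕ} (hm : 1 ≤ m) (hn : 1 ≤ n)
    (U : Set (Eucl m)) (hUopen : IsOpen U) (hUconn : IsConnected U)
    (V : Set (Eucl n)) (hVopen : IsOpen V) (hVconn : IsConnected V)
    (v : Eucl m × Eucl n → EReal) (hv_top : ∀ p ∈ U ×ˢ V, v p ≠ ⊤)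
    (ha_int : ∀ y ∈ V, AEMeasurable (fun x => v (x, y)) (volume.restrict U) ∧
      (∫⁻ x in U, ERealPos (v (x, y)) ∂volume) < ⊤ ∧
      (∫⁻ x in U, ERealPos (-(v (x, y))) ∂volume) < ⊤)
    (ha_conv : ∀ᵐ y ∂(volume.restrict V), ∀ x ∈ U,
      Filter.Tendsto
        (fun r : ℝ => ((((volume (ball x r)).toReal)⁻¹ : ℝ) : EReal) *
          eIntegral (volume.restrict (ball x r)) (fun z => v (z, y)))
        (𝓝[>] (0 : ℝ)) (𝓝 (v (x, y))))
    (hb : ∀ x ∈ U, UpperSemicontinuousOn (fun y => v (x, y)) V) :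
    AEMeasurable v ((volume : Measure (Eucl m × Eucl n)).restrict (U ×ˢ V)) := by
  classical
  haveI : Nontrivial (Eucl m) := eucl_nontrivial hm
  -- the integrand extended by zero
  set vz : Eucl m → Eucl n → EReal := fun z y => if z ∈ U ∧ y ∈ V then v (z, y) else 0
    with hvzdef
  have hvz_netop : ∀ z y, vz z y ≠ ⊤ := by
    intro z y
    by_cases h : z ∈ U ∧ y ∈ V
    · simpa [hvzdef, h] using hv_top (z, y) (mem_prod.mpr h)
    · simp [hvzdef, h]
  have hvz_meas : ∀ y ∈ V, AEMeasurable (fun z => vz z y) volume := by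
    intro y hy
    have h1 : (fun z => vz z y) = U.indicator (fun z => v (z, y)) := by
      funext z; by_cases hz : z ∈ U <;> simp [hvzdef, hz, hy]
    rw [h1]
    exact (aemeasurable_indicator_iff hUopen.measurableSet).mpr (ha_int y hy).1
  have husc : ∀ z y, y ∈ V → ∀ u : ℕ → Eucl n, (∀ j, u j ∈ V) → Tendsto u atTop (𝓝 y) →
      ∀ c : ℝ, vz z y < (c : EReal) → ∀ᶠ j in atTop, vz z (u j) < (c : EReal) := by
    intro z y hy u huV hut c hc
    by_cases hz : z ∈ U
    · have husc' := hb z hz y hy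
      have h2 : vz z y = v (z, y) := by simp [hvzdef, hz, hy]
      rw [h2] at hc
      have hev := husc' (c : EReal) hc
      have hut' : Tendsto u atTop (𝓝[V] y) :=
        tendsto_nhdsWithin_of_tendsto_nhds_of_eventually_within u hut
          (Eventually.of_forall huV)
      filter_upwards [hut'.eventually hev, Eventually.of_forall huV] with j hj hjV
      rwa [show vz z (u j) = v (z, u j) by simp [hvzdef, hz, hjV]]
    · have h0 : vz z y = 0 := by simp [hvzdef, hz]
      rw [h0] at hc
      exact Eventually.of_forall fun j => by
        rw [show vz z (u j) = 0 by simp [hvzdef, hz]]; exact hc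
  -- radii
  set rk : ℕ → ℝ := fun k => 1 / (k + 1) with hrkdef
  have hrkpos : ∀ k : ℕ, 0 < rk k := fun k => by
    have : (0:ℝ) < (k:ℝ) + 1 := by positivity
    simpa [hrkdef] using this
  have hrk0 : Tendsto rk atTop (𝓝 0) := tendsto_one_div_add_atTop_nhds_zero_nat
  -- integrands
  set pneg : Eucl m → Eucl n → ℝ≥0∞ := fun z y => ERealPos (-(vz z y)) with hpnegdef
  set ppos : Eucl m → Eucl n → ℝ≥0∞ := fun z y => ERealPos (vz z y) with hpposdef
  set qf : ℕ → Eucl m → Eucl n → ℝ≥0∞ :=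
    fun K z y => if y ∈ V then (K : ℝ≥0∞) - min (ERealPos (vz z y)) K else 0 with hqfdef
  have hppos_meas : ∀ y ∈ V, AEMeasurable (fun z => ppos z y) volume := fun y hy =>
    measurable_ERealPos.comp_aemeasurable (hvz_meas y hy)
  have hpneg_meas : ∀ y ∈ V, AEMeasurable (fun z => pneg z y) volume := fun y hy =>
    (measurable_ERealPos.comp measurable_neg).comp_aemeasurable (hvz_meas y hy)
  have hqf_meas : ∀ K : ℕ, ∀ y ∈ V, AEMeasurable (fun z => qf K z y) volume := by
    intro K y hy
    have h1 : (fun z => qf K z y) = fun z => (K : ℝ≥0∞) - min (ERealPos (vz z y)) K := by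
      funext z; simp [hqfdef, hy]
    rw [h1]
    exact aemeasurable_const.sub ((hppos_meas y hy).min aemeasurable_const)
  have hpneg_zero : ∀ z y, y ∉ V → pneg z y = 0 := by
    intro z y hy; simp [hpnegdef, hvzdef, hy]
  have hppos_zero : ∀ z y, y ∉ V → ppos z y = 0 := by
    intro z y hy; simp [hpposdef, hvzdef, hy]
  have hpneg_int : ∀ y : Eucl n, ∫⁻ z, pneg z y ∂volume ≠ ⊤ := by
    intro y
    by_cases hy : y ∈ V
    · have h1 : (fun z => pneg z y) = U.indicator (fun z => ERealPos (-(v (z, y)))) := by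
        funext z; by_cases hz : z ∈ U <;> simp [hpnegdef, hvzdef, hz, hy]
      rw [h1, lintegral_indicator hUopen.measurableSet]
      exact (ha_int y hy).2.2.ne
    · rw [show (fun z => pneg z y) = fun _ => 0 from funext fun z => hpneg_zero z y hy]
      simp
  have hppos_int : ∀ y : Eucl n, ∫⁻ z, ppos z y ∂volume ≠ ⊤ := by
    intro y
    by_cases hy : y ∈ V
    · have h1 : (fun z => ppos z y) = U.indicator (fun z => ERealPos (v (z, y))) := by
        funext z; by_cases hz : z ∈ U <;> simp [hpposdef, hvzdef, hz, hy]
      rw [h1, lintegral_indicator hUopen.measurableSet]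
      exact (ha_int y hy).2.1.ne
    · rw [show (fun z => ppos z y) = fun _ => 0 from funext fun z => hppos_zero z y hy]
      simp
  have hpneg_aem : ∀ y : Eucl n, AEMeasurable (fun z => pneg z y) volume := by
    intro y
    by_cases hy : y ∈ V
    · exact hpneg_meas y hy
    · rw [show (fun z => pneg z y) = fun _ => 0 from funext fun z => hpneg_zero z y hy]
      exact aemeasurable_const
  have hqf_aem : ∀ K : ℕ, ∀ y : Eucl n, AEMeasurable (fun z => qf K z y) volume := by
    intro K y
    by_cases hy : y ∈ V
    · exact hqf_meas K y hy
    · rw [show (fun z => qf K z y) = fun _ => 0 from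
        funext fun z => by simp [hqfdef, hy]]
      exact aemeasurable_const
  -- joint measurability of the negative-part integrals
  have hNf_meas : ∀ k : ℕ, Measurable
      (fun p : Eucl m × Eucl n => ∫⁻ z in ball p.1 (rk k), pneg z p.2 ∂volume) := by
    intro k
    exact measurable_uncurry_of_continuous_of_measurable
      (u := fun (x : Eucl m) (y : Eucl n) => ∫⁻ z in ball x (rk k), pneg z y ∂volume)
      (fun y => continuous_ball_lintegral hm _ _ (hpneg_aem y)
        (fun x => ne_top_of_le_ne_top (hpneg_int y) (setLIntegral_le_lintegral _ _)))
      (fun x => measurable_param_lintegral hVopen _ _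
        (fun y hy => (hpneg_meas y hy).restrict)
        (fun z y hy => hpneg_zero z y hy)
        (fun z y hy u huV hut => liminf_pneg (hvz_netop z y) (husc z y hy u huV hut)))
  have hQf_meas : ∀ K k : ℕ, Measurable
      (fun p : Eucl m × Eucl n => ∫⁻ z in ball p.1 (rk k), qf K z p.2 ∂volume) := by
    intro K k
    refine measurable_uncurry_of_continuous_of_measurable
      (u := fun (x : Eucl m) (y : Eucl n) => ∫⁻ z in ball x (rk k), qf K z y ∂volume)
      (fun y => continuous_ball_lintegral hm _ _ (hqf_aem K y) (fun x => ?_))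
      (fun x => measurable_param_lintegral hVopen _ _
        (fun y hy => (hqf_meas K y hy).restrict)
        (fun z y hy => by simp [hqfdef, hy])
        (fun z y hy u huV hut => ?_))
    · refine ne_top_of_le_ne_top ?_ (lintegral_mono (fun z => ?_) :
        (∫⁻ z in ball x (rk k + 1), qf K z y ∂volume) ≤
          ∫⁻ _ in ball x (rk k + 1), (K : ℝ≥0∞) ∂volume)
      · rw [setLIntegral_const]
        exact ENNReal.mul_ne_top (ENNReal.natCast_ne_top K) measure_ball_lt_top.ne
      · by_cases hy : y ∈ V <;> simp [hqfdef, hy, tsub_le_self]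
    · have h1 : qf K z y = (K : ℝ≥0∞) - min (ERealPos (vz z y)) K := by simp [hqfdef, hy]
      have h2 : ∀ j, qf K z (u j) = (K : ℝ≥0∞) - min (ERealPos (vz z (u j))) K :=
        fun j => by simp [hqfdef, huV j]
      rw [h1]
      simp only [h2]
      exact liminf_qK K (husc z y hy u huV hut)
  -- the positive-part integrals, via truncation
  set volk : ℕ → ℝ≥0∞ := fun k => volume (ball (0 : Eucl m) (rk k)) with hvolkdef
  have hvolk_fin : ∀ k, volk k ≠ ⊤ := fun k => measure_ball_lt_top.ne
  set Pf : ℕ → Eucl m × Eucl n → ℝ≥0∞ := fun k p =>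
    ⨆ K : ℕ, ((K : ℝ≥0∞) * volk k - ∫⁻ z in ball p.1 (rk k), qf K z p.2 ∂volume)
    with hPfdef
  have hPf_meas : ∀ k, Measurable (Pf k) := fun k =>
    Measurable.iSup fun K => measurable_const.sub (hQf_meas K k)
  have hPf_eq : ∀ k x, ∀ y ∈ V, Pf k (x, y) = ∫⁻ z in ball x (rk k), ppos z y ∂volume := by
    intro k x y hy
    have hball : volume (ball x (rk k)) = volk k :=
      Measure.addHaar_ball_center volume x (rk k)
    have hmin : ∀ K : ℕ, (K : ℝ≥0∞) * volk k - ∫⁻ z in ball x (rk k), qf K z y ∂volume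
        = ∫⁻ z in ball x (rk k), min (ppos z y) K ∂volume := by
      intro K
      have hqy : (fun z => qf K z y) = fun z => (K : ℝ≥0∞) - min (ppos z y) K :=
        funext fun z => by simp [hqfdef, hpposdef, hy]
      have hptw : ∀ z, min (ppos z y) (K : ℝ≥0∞) + ((K : ℝ≥0∞) - min (ppos z y) K)
          = (K : ℝ≥0∞) := fun z => add_tsub_cancel_of_le (min_le_right _ _)
      have hadd : (∫⁻ z in ball x (rk k), (min (ppos z y) K
            + ((K : ℝ≥0∞) - min (ppos z y) K)) ∂volume) = (K : ℝ≥0∞) * volk k := by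
        rw [lintegral_congr hptw, setLIntegral_const, hball]
      rw [lintegral_add_left' (((hppos_meas y hy).min aemeasurable_const).restrict) _]
        at hadd
      have hqfin : (∫⁻ z in ball x (rk k), ((K : ℝ≥0∞) - min (ppos z y) K) ∂volume) ≠ ⊤ := by
        refine ne_top_of_le_ne_top ?_ (lintegral_mono fun z => tsub_le_self)
        rw [setLIntegral_const, hball]
        exact ENNReal.mul_ne_top (ENNReal.natCast_ne_top K) (hvolk_fin k)
      rw [hqy]
      exact (ENNReal.eq_sub_of_add_eq hqfin hadd).symm
    have hsup : ∀ z, (⨆ K : ℕ, min (ppos z y) (K : ℝ≥0∞)) = ppos z y := by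
      intro z
      refine le_antisymm (iSup_le fun K => min_le_left _ _) ?_
      by_cases hp : ppos z y = ⊤
      · rw [hp]
        have : ∀ K : ℕ, min (⊤ : ℝ≥0∞) (K : ℝ≥0∞) = K := fun K => min_eq_right le_top
        calc (⊤ : ℝ≥0∞) = ⨆ K : ℕ, (K : ℝ≥0∞) := ENNReal.iSup_natCast.symm
          _ ≤ ⨆ K : ℕ, min (⊤ : ℝ≥0∞) (K : ℝ≥0∞) := by simp [this]
      · obtain ⟨K, hK⟩ := ENNReal.exists_nat_gt hp
        calc ppos z y = min (ppos z y) (K : ℝ≥0∞) := (min_eq_left hK.le).symm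
          _ ≤ ⨆ K : ℕ, min (ppos z y) (K : ℝ≥0∞) :=
            le_iSup (fun K : ℕ => min (ppos z y) (K : ℝ≥0∞)) K
    calc Pf k (x, y) = ⨆ K : ℕ, ∫⁻ z in ball x (rk k), min (ppos z y) K ∂volume :=
          iSup_congr fun K => hmin K
      _ = ∫⁻ z in ball x (rk k), (⨆ K : ℕ, min (ppos z y) K) ∂volume :=
          (lintegral_iSup' (f := fun (K : ℕ) (z : Eucl m) => min (ppos z y) (K : ℝ≥0∞))
            (fun K => ((hppos_meas y hy).min aemeasurable_const).restrict)
            (ae_of_all _ fun z K₁ K₂ h =>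
              min_le_min le_rfl (by exact_mod_cast h))).symm
      _ = ∫⁻ z in ball x (rk k), ppos z y ∂volume := by
          exact lintegral_congr fun z => hsup z
  -- approximating sequence
  set ck : ℕ → ℝ := fun k => ((volk k).toReal)⁻¹ with hckdef
  have hck_nonneg : ∀ k, 0 ≤ ck k := fun k => inv_nonneg.mpr ENNReal.toReal_nonneg
  set Af : ℕ → Eucl m × Eucl n → EReal := fun k p =>
    ((ENNReal.ofReal (ck k) * Pf k p : ℝ≥0∞) : EReal)
      - ((ENNReal.ofReal (ck k) * (∫⁻ z in ball p.1 (rk k), pneg z p.2 ∂volume) : ℝ≥0∞) : EReal)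
    with hAfdef
  have hAf_meas : ∀ k, Measurable (Af k) := fun k =>
    measurable_esub.comp ((measurable_const.mul (hPf_meas k)).prodMk
      (measurable_const.mul (hNf_meas k)))
  set g : Eucl m × Eucl n → EReal := fun p => limsup (fun k => Af k p) atTop with hgdef
  have hg_meas : Measurable g := Measurable.limsup hAf_meas
  -- identification of Af with the averages, on small balls
  have hAf_eq : ∀ k x, ∀ y ∈ V, ball x (rk k) ⊆ U →
      Af k (x, y) = ((((volume (ball x (rk k))).toReal)⁻¹ : ℝ) : EReal) *
        eIntegral (volume.restrict (ball x (rk k))) (fun z => v (z, y)) := by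
    intro k x y hy hball
    have hvol : volume (ball x (rk k)) = volk k :=
      Measure.addHaar_ball_center volume x (rk k)
    have hP : Pf k (x, y) = ∫⁻ z in ball x (rk k), ERealPos (v (z, y)) ∂volume := by
      rw [hPf_eq k x y hy]
      refine setLIntegral_congr_fun measurableSet_ball (fun z hz => ?_)
      simp [hpposdef, hvzdef, hball hz, hy]
    have hN : (∫⁻ z in ball x (rk k), pneg z y ∂volume)
        = ∫⁻ z in ball x (rk k), ERealPos (-(v (z, y))) ∂volume := by
      refine setLIntegral_congr_fun measurableSet_ball (fun z hz => ?_)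
      simp [hpnegdef, hvzdef, hball hz, hy]
    have hcm := const_mul_esub (hck_nonneg k)
      (∫⁻ z in ball x (rk k), ERealPos (v (z, y)) ∂volume)
      (∫⁻ z in ball x (rk k), ERealPos (-(v (z, y))) ∂volume)
    have hc : ((volume (ball x (rk k))).toReal)⁻¹ = ck k := by rw [hvol, hckdef]
    calc Af k (x, y)
        = ((ENNReal.ofReal (ck k) *
              (∫⁻ z in ball x (rk k), ERealPos (v (z, y)) ∂volume) : ℝ≥0∞) : EReal)
          - ((ENNReal.ofReal (ck k) *
              (∫⁻ z in ball x (rk k), ERealPos (-(v (z, y))) ∂volume) : ℝ≥0∞) : EReal) := by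
          simp only [hAfdef]
          rw [hP, hN]
      _ = ((ck k : ℝ) : EReal) *
            (((∫⁻ z in ball x (rk k), ERealPos (v (z, y)) ∂volume : ℝ≥0∞) : EReal)
              - ((∫⁻ z in ball x (rk k), ERealPos (-(v (z, y))) ∂volume : ℝ≥0∞) : EReal)) :=
          hcm.symm
      _ = ((((volume (ball x (rk k))).toReal)⁻¹ : ℝ) : EReal) *
            eIntegral (volume.restrict (ball x (rk k))) (fun z => v (z, y)) := by
          rw [hc]
          simp only [eIntegral]
  -- the tendsto filter for radii
  have hrk : Tendsto rk atTop (𝓝[>] (0 : ℝ)) :=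
    tendsto_nhdsWithin_of_tendsto_nhds_of_eventually_within _ hrk0
      (Eventually.of_forall fun k => hrkpos k)
  -- a.e. identification of v with g on U ×ˢ V
  have hae : v =ᵐ[(volume : Measure (Eucl m × Eucl n)).restrict (U ×ˢ V)] g := by
    rw [Filter.EventuallyEq, ae_restrict_iff' (hUopen.measurableSet.prod hVopen.measurableSet)]
    have hconv := (ae_restrict_iff' hVopen.measurableSet).mp ha_conv
    obtain ⟨N', hNsub, hN'meas, hN'null⟩ :=
      exists_measurable_superset_of_null (ae_iff.mp hconv)
    have hgood : ∀ x ∈ U, ∀ y ∈ V, y ∉ N' → v (x, y) = g (x, y) := by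
      intro x hx y hy hyN
      have hP : ∀ x' ∈ U, Tendsto
          (fun r : ℝ => ((((volume (ball x' r)).toReal)⁻¹ : ℝ) : EReal) *
            eIntegral (volume.restrict (ball x' r)) (fun z => v (z, y)))
          (𝓝[>] (0 : ℝ)) (𝓝 (v (x', y))) := by
        have h1 : ¬¬(y ∈ V → ∀ x' ∈ U, Tendsto
            (fun r : ℝ => ((((volume (ball x' r)).toReal)⁻¹ : ℝ) : EReal) *
              eIntegral (volume.restrict (ball x' r)) (fun z => v (z, y)))
            (𝓝[>] (0 : ℝ)) (𝓝 (v (x', y)))) := fun hbad => hyN (hNsub hbad)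
        exact not_not.mp h1 hy
      have h1 : Tendsto (fun k : ℕ =>
          ((((volume (ball x (rk k))).toReal)⁻¹ : ℝ) : EReal) *
            eIntegral (volume.restrict (ball x (rk k))) (fun z => v (z, y)))
          atTop (𝓝 (v (x, y))) := (hP x hx).comp hrk
      obtain ⟨ε, hε, hballU⟩ := Metric.isOpen_iff.mp hUopen x hx
      have hev : ∀ᶠ k : ℕ in atTop, rk k < ε := hrk0.eventually (eventually_lt_nhds hε)
      have h2 : ∀ᶠ k : ℕ in atTop, Af k (x, y) =
          ((((volume (ball x (rk k))).toReal)⁻¹ : ℝ) : EReal) *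
            eIntegral (volume.restrict (ball x (rk k))) (fun z => v (z, y)) := by
        filter_upwards [hev] with k hk
        exact hAf_eq k x y hy ((ball_subset_ball hk.le).trans hballU)
      have h3 : Tendsto (fun k => Af k (x, y)) atTop (𝓝 (v (x, y))) :=
        h1.congr' (h2.mono fun k hk => hk.symm)
      exact (h3.limsup_eq).symm
    have hnull : volume {p : Eucl m × Eucl n | ¬ (p ∈ U ×ˢ V → v p = g p)} = 0 := by
      refine measure_mono_null (fun p hp => ?_)
        (show volume ((univ : Set (Eucl m)) ×ˢ N') = 0 by
          rw [Measure.volume_eq_prod, Measure.prod_prod, hN'null, mul_zero])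
      simp only [mem_setOf_eq] at hp
      rw [_root_.not_imp] at hp
      obtain ⟨hpin, hne⟩ := hp
      have hx : p.1 ∈ U := (mem_prod.mp hpin).1
      have hy : p.2 ∈ V := (mem_prod.mp hpin).2
      refine mem_prod.mpr ⟨mem_univ _, ?_⟩
      by_contra hyN
      exact hne (by
        have := hgood p.1 hx p.2 hy hyN
        simpa using this)
    exact ae_iff.mpr hnull
  exact hg_meas.aemeasurable.congr hae.symm
end
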